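/- arXiv:2511.02934 — 2 statements merged into one kernel-verified Lean document; each statement's English description precedes it below -/
import Mathlib

section
/- Let d ≥ 2, r ∈ (0,1], and v ∈ ℝ^d (Euclidean space). Then ∫_{S^{d−1}} |⟨v,ω⟩| (‖v − (1+r)⟨v,ω⟩ω‖² − ‖v‖²) dσ(ω) = −(1−r²)·‖v‖³·∫_{S^{d−1}} |⟨e₁,ω⟩|³ dσ(ω), where σ is the surface measure on the unit sphere S^{d−1} and e₁ is the first standard basis vector. (This is the dissipation identity for the second velocity moment underlying the decay of kinetic energy for the inelastic linear Boltzmann equation.) -/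
/-!
On the unit sphere a collision changes the energy by
`‖v - (1 + r)⟪v, ω⟫ ω‖² - ‖v‖² = -(1 - r²)⟪v, ω⟫²`, so the integrand is `-(1 - r²)|⟪v, ω⟫|³`.
The surface measure is invariant under linear isometries, and the reflection through the
hyperplane orthogonal to `v - ‖v‖e₁` maps `v` to `‖v‖e₁`; hence
`∫ |⟪v, ω⟫|³ dσ = ‖v‖³ ∫ |⟪e₁, ω⟫|³ dσ`.
-/

open MeasureTheory Metric
open scoped RealInnerProductSpace Pointwise

/-- The surface measure on the unit sphere of `ℝ^d`. -/
noncomputable def sphereSurfaceMeasure (d : ℕ) :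
    Measure (sphere (0 : EuclideanSpace ℝ (Fin d)) 1) :=
  (volume : Measure (EuclideanSpace ℝ (Fin d))).toSphere

namespace LinearIsometryEquiv

variable {E : Type*} [NormedAddCommGroup E] [NormedSpace ℝ E]

noncomputable def sphereHomeomorph (e : E ≃ₗᵢ[ℝ] E) : sphere (0 : E) 1 ≃ₜ sphere (0 : E) 1 :=
  e.toHomeomorph.subtype fun x => by simp

lemma image_val_preimage_sphereHomeomorph (e : E ≃ₗᵢ[ℝ] E) (s : Set (sphere (0 : E) 1)) :
    (↑) '' (e.sphereHomeomorph ⁻¹' s) = e ⁻¹' ((↑) '' s) := by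
  ext x
  constructor
  · rintro ⟨ω, hω, rfl⟩
    exact ⟨_, hω, rfl⟩
  · rintro ⟨ω, hω, hx⟩
    have hxs : x ∈ sphere (0 : E) 1 := by simpa [hx] using ω.2
    have hφx : e.sphereHomeomorph ⟨x, hxs⟩ = ω := Subtype.ext hx.symm
    exact ⟨⟨x, hxs⟩, by rwa [Set.mem_preimage, hφx], rfl⟩

lemma preimage_set_smul (e : E ≃ₗᵢ[ℝ] E) (S : Set ℝ) (A : Set E) :
    e ⁻¹' (S • A) = S • e ⁻¹' A := by
  have preimage_eq (B : Set E) : e ⁻¹' B = e.symm '' B := by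
    rw [e.symm.image_eq_preimage_symm, e.symm_symm]
  rw [preimage_eq, preimage_eq]
  exact Set.image_image2_distrib_right fun c x => e.symm.map_smul c x

variable [MeasurableSpace E] [BorelSpace E]

theorem measurePreserving_sphereHomeomorph {μ : Measure E} (e : E ≃ₗᵢ[ℝ] E)
    (he : MeasurePreserving e μ μ) :
    MeasurePreserving e.sphereHomeomorph μ.toSphere μ.toSphere := by
  refine ⟨e.sphereHomeomorph.measurable, Measure.ext fun s hs => ?_⟩
  rw [Measure.map_apply e.sphereHomeomorph.measurable hs,
    Measure.toSphere_apply' _ (e.sphereHomeomorph.measurable hs), Measure.toSphere_apply' _ hs,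
    image_val_preimage_sphereHomeomorph, ← preimage_set_smul,
    he.measure_preimage_emb e.toHomeomorph.measurableEmbedding]

theorem integral_toSphere_comp {G : Type*} [NormedAddCommGroup G] [NormedSpace ℝ G]
    {μ : Measure E} (e : E ≃ₗᵢ[ℝ] E) (he : MeasurePreserving e μ μ) (f : E → G) :
    ∫ ω : sphere (0 : E) 1, f (e ω) ∂μ.toSphere = ∫ ω : sphere (0 : E) 1, f ω ∂μ.toSphere :=
  (e.measurePreserving_sphereHomeomorph he).integral_comp
    e.sphereHomeomorph.measurableEmbedding (fun ω => f ω)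

end LinearIsometryEquiv

section InnerProductSpace

variable {E : Type*} [NormedAddCommGroup E] [InnerProductSpace ℝ E] [FiniteDimensional ℝ E]
  [MeasurableSpace E] [BorelSpace E]

theorem integral_toSphere_inner_eq_of_norm_eq {G : Type*} [NormedAddCommGroup G]
    [NormedSpace ℝ G] (f : ℝ → G) {v w : E} (h : ‖v‖ = ‖w‖) :
    ∫ ω : sphere (0 : E) 1, f ⟪v, ω⟫ ∂(volume : Measure E).toSphere =
      ∫ ω : sphere (0 : E) 1, f ⟪w, ω⟫ ∂(volume : Measure E).toSphere := by
  set e := Submodule.reflection (ℝ ∙ (v - w))ᗮ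
  have hev : e v = w := Submodule.reflection_sub h
  rw [← e.integral_toSphere_comp e.measurePreserving (fun x => f ⟪w, x⟫)]
  simp only [← hev, e.inner_map_map]

theorem integral_toSphere_abs_inner_pow (n : ℕ) (v : E) {u : E} (hu : ‖u‖ = 1) :
    ∫ ω : sphere (0 : E) 1, |⟪v, ω⟫| ^ n ∂(volume : Measure E).toSphere =
      ‖v‖ ^ n * ∫ ω : sphere (0 : E) 1, |⟪u, ω⟫| ^ n ∂(volume : Measure E).toSphere := by
  have hnorm : ‖v‖ = ‖‖v‖ • u‖ := by rw [norm_smul, hu, norm_norm, mul_one]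
  rw [integral_toSphere_inner_eq_of_norm_eq (|·| ^ n) hnorm, ← integral_const_mul]
  simp only [real_inner_smul_left, abs_mul, abs_norm, mul_pow]

end InnerProductSpace

theorem norm_sq_inelastic_sub_norm_sq {F : Type*} [NormedAddCommGroup F] [InnerProductSpace ℝ F]
    (r : ℝ) (v : F) {ω : F} (hω : ‖ω‖ = 1) :
    ‖v - ((1 + r) * ⟪v, ω⟫) • ω‖ ^ 2 - ‖v‖ ^ 2 = -(1 - r ^ 2) * ⟪v, ω⟫ ^ 2 := by
  rw [norm_sub_sq_real, real_inner_smul_right, norm_smul, Real.norm_eq_abs, hω, mul_one, sq_abs]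
  ring

/-- Dissipation identity for the second velocity moment of the inelastic linear Boltzmann
equation: `∫_{S^{d−1}} |⟪v,ω⟫| (‖v−(1+r)⟪v,ω⟫ω‖² − ‖v‖²) dσ(ω)
  = −(1−r²)·‖v‖³·∫_{S^{d−1}} |⟪e₁,ω⟫|³ dσ(ω)`. -/
theorem inelastic_energy_dissipation_identity (d : ℕ) (hd : 2 ≤ d) (r : ℝ)
    (v : EuclideanSpace ℝ (Fin d)) :
    (∫ ω : sphere (0 : EuclideanSpace ℝ (Fin d)) 1,
        |⟪v, (ω : EuclideanSpace ℝ (Fin d))⟫| *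
          (‖v - ((1 + r) * ⟪v, (ω : EuclideanSpace ℝ (Fin d))⟫) •
              (ω : EuclideanSpace ℝ (Fin d))‖ ^ 2 - ‖v‖ ^ 2) ∂ sphereSurfaceMeasure d)
      = -(1 - r ^ 2) * ‖v‖ ^ 3 *
          ∫ ω : sphere (0 : EuclideanSpace ℝ (Fin d)) 1,
            |⟪(EuclideanSpace.single (⟨0, by omega⟩ : Fin d) (1 : ℝ)),
              (ω : EuclideanSpace ℝ (Fin d))⟫| ^ 3 ∂ sphereSurfaceMeasure d := by
  have pointwise (ω : sphere (0 : EuclideanSpace ℝ (Fin d)) 1) :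
      |⟪v, (ω : EuclideanSpace ℝ (Fin d))⟫| *
          (‖v - ((1 + r) * ⟪v, (ω : EuclideanSpace ℝ (Fin d))⟫) •
              (ω : EuclideanSpace ℝ (Fin d))‖ ^ 2 - ‖v‖ ^ 2)
        = -(1 - r ^ 2) * |⟪v, (ω : EuclideanSpace ℝ (Fin d))⟫| ^ 3 := by
    rw [norm_sq_inelastic_sub_norm_sq r v (norm_eq_of_mem_sphere ω),
      ← sq_abs ⟪v, (ω : EuclideanSpace ℝ (Fin d))⟫]
    ring
  rw [integral_congr_ae (.of_forall pointwise), integral_const_mul, sphereSurfaceMeasure,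
    integral_toSphere_abs_inner_pow 3 v (u := EuclideanSpace.single _ 1) (by simp), mul_assoc]
end

section
/- Let d ≥ 2 and r ∈ (0,1). There exist constants δ₀ > 0 and C > 0, depending only on d and r, with the following property: for every v ∈ ℝ^d with v ≠ 0, every unit vector p ∈ S^{d−1}, and every δ with 0 < δ ≤ δ₀, there exists a measurable subset P ⊆ S^{d−1} with σ(P) ≤ C·δ^{1/2} such that every unit vector ω ∈ S^{d−1} satisfying 1 − |⟨κ_ω(v)/‖κ_ω(v)‖, p⟩| ≤ δ belongs to P. (Almost colinearity after scattering: the post-collisional velocity κ_ω(v) is almost colinear to p only for angular parameters ω in a set of spherical measure at most C·δ^{1/2}.) -/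
/-!
Write `u = v / ‖v‖ = a p + b q` with `q` a unit vector orthogonal to `p`. If `1 - |⟪κ̂, p⟫| ≤ δ`
for the direction `κ̂` of `κ_ω(u)`, then the component of `κ_ω(u)` orthogonal to `p`, namely
`(b - (1+r)⟪u,ω⟫⟪q,ω⟫) q - (1+r)⟪u,ω⟫ w` with `w` the part of `ω` off the plane of `p` and `q`,
has length at most `ε = √(2δ)`. Unless `|⟪u,ω⟫| ≤ 2ε`, the second term forces `ω` close to that
plane. Identifying the plane with `ℂ`, a unit `ζ` scatters `μ = a + b i` to
`((1 - r) μ - (1 + r) μ̄ ζ²) / 2`, so the first term says that `Im (μ̄ ζ²)` is within `O(ε)` of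
`t = (1 - r) b / (1 + r)`. As `t² ≤ 1 - r`, the line `Im z = t` crosses the unit circle
transversally, at `±√(1 - t²) + t i` with `√(1 - t²) ≥ √r`, so `μ̄ ζ²` lies within `O(ε / √r)` of
a crossing point and `ζ` near one of `±ζ₁, ±ζ₂`. Hence `ω` lies in one of three slabs
`|⟪n, ω⟫| = O(ε)`, each of surface measure `O(ε)`.
-/

open MeasureTheory Metric
open scoped RealInnerProductSpace

/-- The inelastic scattering map `κ_ω(v) = v − (1+r)⟪v,ω⟫ω`. -/
noncomputable def inelasticScatter (d : ℕ) (r : ℝ) (ω v : EuclideanSpace ℝ (Fin d)) :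
    EuclideanSpace ℝ (Fin d) :=
  v - ((1 + r) * ⟪v, ω⟫) • ω

open Set Module ComplexConjugate
open scoped Pointwise

section Slab

variable {E : Type*} [NormedAddCommGroup E] [InnerProductSpace ℝ E]

def sphereSlab (e : E) (w : ℝ) : Set (sphere (0 : E) 1) :=
  {ω | |⟪e, (ω : E)⟫| ≤ w}

@[simp]
theorem mem_sphereSlab (e : E) (w : ℝ) (ω : sphere (0 : E) 1) :
    ω ∈ sphereSlab e w ↔ |⟪e, (ω : E)⟫| ≤ w :=
  Iff.rfl

theorem measurableSet_sphereSlab [MeasurableSpace E] [OpensMeasurableSpace E] (e : E) (w : ℝ) :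
    MeasurableSet (sphereSlab e w) :=
  (isClosed_le (continuous_const.inner continuous_subtype_val).abs continuous_const).measurableSet

variable [FiniteDimensional ℝ E] [MeasurableSpace E] [BorelSpace E]

theorem OrthonormalBasis.volume_le_of_abs_inner_le {ι : Type*} [Fintype ι]
    (b : OrthonormalBasis ι ℝ E) {W : ι → ℝ} (hW : ∀ i, 0 ≤ W i) {s : Set E}
    (hs : ∀ x ∈ s, ∀ i, |⟪b i, x⟫| ≤ W i) :
    volume s ≤ ENNReal.ofReal (∏ i, 2 * W i) := by
  have hbox : s ⊆ (fun x => WithLp.ofLp (b.repr x)) ⁻¹' Set.pi univ fun i => Icc (-W i) (W i) :=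
    fun x hx i _ => by simpa [abs_le, b.repr_apply_apply] using hs x hx i
  calc volume s ≤ volume (Set.pi univ fun i => Icc (-W i) (W i)) :=
        (measure_mono hbox).trans
          (((PiLp.volume_preserving_ofLp ι).comp b.measurePreserving_repr).measure_preimage_le _)
    _ = ENNReal.ofReal (∏ i, 2 * W i) := by
        simp only [volume_pi_pi, Real.volume_Icc, sub_neg_eq_add, ← two_mul]
        exact (ENNReal.ofReal_prod_of_nonneg fun i _ => by linarith [hW i]).symm

/-- The cone over the slab lies in a box of an orthonormal basis containing `e`. -/
theorem toSphere_sphereSlab_le {e : E} (he : ‖e‖ = 1) {w : ℝ} (hw : 0 ≤ w) :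
    (volume : Measure E).toSphere (sphereSlab e w) ≤
      ENNReal.ofReal (finrank ℝ E * 2 ^ finrank ℝ E * w) := by
  classical
  obtain ⟨F, b, heF, hb⟩ := (orthonormal_subsingleton_iff.2 fun i => by rw [i.2]; exact he :
    Orthonormal ℝ ((↑) : ({e} : Set E) → E)).exists_orthonormalBasis_extension
  set e' : F := ⟨e, heF rfl⟩
  have hcard : finrank ℝ E = Fintype.card F := finrank_eq_card_basis b.toBasis
  have hcone : ∀ x ∈ Ioo (0 : ℝ) 1 • ((↑) '' sphereSlab e w : Set E), ∀ i,
      |⟪b i, x⟫| ≤ if i = e' then w else 1 := by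
    rintro _ ⟨c, ⟨hc0, hc1⟩, _, ⟨ω, hω, rfl⟩, rfl⟩ i
    rw [real_inner_smul_right, abs_mul, abs_of_pos hc0]
    split_ifs with hi
    · rw [hi, hb]
      nlinarith [(mem_sphereSlab e w ω).1 hω, abs_nonneg ⟪e, (ω : E)⟫]
    · have h1 : |⟪b i, (ω : E)⟫| ≤ 1 := by
        simpa [b.orthonormal.1 i] using abs_real_inner_le_norm (b i) (ω : E)
      nlinarith [abs_nonneg ⟪b i, (ω : E)⟫]
  rw [Measure.toSphere_apply' _ (measurableSet_sphereSlab e w)]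
  calc (finrank ℝ E : ENNReal) * volume (Ioo (0 : ℝ) 1 • ((↑) '' sphereSlab e w : Set E))
      ≤ finrank ℝ E * ENNReal.ofReal (∏ i, 2 * if i = e' then w else 1) := by
        gcongr
        exact b.volume_le_of_abs_inner_le (fun i => by split_ifs <;> linarith) hcone
    _ = ENNReal.ofReal (finrank ℝ E * 2 ^ finrank ℝ E * w) := by
        rw [Finset.prod_mul_distrib, Finset.prod_ite_eq', ENNReal.ofReal_mul (by positivity)]
        simp [hcard, mul_assoc]

end Slab

namespace Complex

theorem abs_im_conj_mul_le (ζ ζ₀ : ℂ) : |(conj ζ₀ * ζ).im| ≤ ‖ζ₀‖ * ‖ζ - ζ₀‖ := by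
  have h : (conj ζ₀ * ζ).im = (conj ζ₀ * (ζ - ζ₀)).im := by
    simp only [mul_sub, sub_im, conj_mul', ← ofReal_pow, ofReal_im, sub_zero]
  rw [h, ← norm_conj ζ₀, ← norm_mul]
  exact abs_im_le_norm _

theorem abs_im_conj_mul_le_norm_sq_sub {ζ ζ₀ : ℂ} (hζ : ‖ζ‖ = 1) (hζ₀ : ‖ζ₀‖ = 1) :
    |(conj ζ₀ * ζ).im| ≤ ‖ζ ^ 2 - ζ₀ ^ 2‖ := by
  have hsub : |(conj ζ₀ * ζ).im| ≤ ‖ζ - ζ₀‖ := by simpa [hζ₀] using abs_im_conj_mul_le ζ ζ₀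
  have hadd : |(conj ζ₀ * ζ).im| ≤ ‖ζ + ζ₀‖ := by
    have h := abs_im_conj_mul_le ζ (-ζ₀)
    rwa [map_neg, neg_mul, neg_im, abs_neg, norm_neg, hζ₀, one_mul, sub_neg_eq_add] at h
  have hpar := parallelogram_law_with_norm ℝ ζ ζ₀
  rw [hζ, hζ₀] at hpar
  rw [show ζ ^ 2 - ζ₀ ^ 2 = (ζ - ζ₀) * (ζ + ζ₀) by ring, norm_mul]
  -- one of the two factors is at least `1`, since their squares add up to `4`
  rcases le_total 1 ‖ζ + ζ₀‖ with h | h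
  · nlinarith [norm_nonneg (ζ - ζ₀)]
  · nlinarith [norm_nonneg (ζ + ζ₀), norm_nonneg (ζ - ζ₀), abs_nonneg (conj ζ₀ * ζ).im]

theorem exists_mul_norm_sub_le_abs_im_sub {y : ℂ} (hy : ‖y‖ = 1) {t G : ℝ}
    (htG : t ^ 2 + G ^ 2 = 1) (hG : 0 ≤ G) :
    ∃ w ∈ ({⟨G, t⟩, ⟨-G, t⟩} : Set ℂ), G * ‖y - w‖ ≤ 3 * |y.im - t| := by
  have hy2 : y.re ^ 2 + y.im ^ 2 = 1 := by
    have h := Complex.sq_norm y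
    rw [hy, normSq_apply] at h
    linarith
  have key : ∀ g : ℝ, g ^ 2 = G ^ 2 → 0 ≤ g * y.re → G * ‖y - ⟨g, t⟩‖ ≤ 3 * |y.im - t| := by
    intro g hg hgy
    have hnorm : ‖y - ⟨g, t⟩‖ ^ 2 = (y.re - g) ^ 2 + (y.im - t) ^ 2 := by
      rw [Complex.sq_norm, normSq_apply]; simp; ring
    have hG2 : G ^ 2 ≤ (y.re + g) ^ 2 := by nlinarith
    have hfactor : ((y.re - g) * (y.re + g)) ^ 2 = (y.im - t) ^ 2 * (y.im + t) ^ 2 := by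
      linear_combination (y.re ^ 2 - g ^ 2 + t ^ 2 - y.im ^ 2) * (hy2 - htG - hg)
    have hsum : (y.im + t) ^ 2 ≤ 4 := by nlinarith
    have hsq : (G * ‖y - ⟨g, t⟩‖) ^ 2 ≤ (3 * |y.im - t|) ^ 2 := by
      rw [mul_pow, hnorm, mul_pow, sq_abs]
      nlinarith [mul_le_mul_of_nonneg_left hG2 (sq_nonneg (y.re - g)),
        mul_le_mul_of_nonneg_left hsum (sq_nonneg (y.im - t))]
    exact (pow_le_pow_iff_left₀ (by positivity) (by positivity) two_ne_zero).1 hsq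
  rcases le_total 0 y.re with h | h
  · exact ⟨_, Or.inl rfl, key G rfl (mul_nonneg hG h)⟩
  · exact ⟨_, Or.inr rfl, key (-G) (neg_sq G) (by nlinarith)⟩

/-- `ζ₁` and `ζ₂` are square roots of `μ (±G + t i)`. -/
theorem exists_pair_mul_abs_im_conj_mul_le {μ : ℂ} (hμ : ‖μ‖ = 1) {t G : ℝ}
    (htG : t ^ 2 + G ^ 2 = 1) (hG : 0 ≤ G) :
    ∃ ζ₁ ζ₂ : ℂ, ‖ζ₁‖ = 1 ∧ ‖ζ₂‖ = 1 ∧ ∀ ζ : ℂ, ‖ζ‖ = 1 → ∃ ζ₀ ∈ ({ζ₁, ζ₂} : Set ℂ),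
      G * |(conj ζ₀ * ζ).im| ≤ 3 * |(conj μ * ζ ^ 2).im - t| := by
  have hunit : ∀ {ζ : ℂ} {g : ℝ}, g ^ 2 = G ^ 2 → ζ ^ 2 = μ * ⟨g, t⟩ → ‖ζ‖ = 1 := by
    intro ζ g hg hζ
    have hw : ‖(⟨g, t⟩ : ℂ)‖ = 1 := by
      rw [norm_def, normSq_mk, ← sq, ← sq, hg, add_comm, htG, Real.sqrt_one]
    have h := congrArg norm hζ
    rw [norm_pow, norm_mul, hμ, one_mul, hw] at h
    exact (pow_eq_one_iff_of_nonneg (norm_nonneg ζ) two_ne_zero).1 h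
  obtain ⟨ζ₁, hζ₁⟩ := IsAlgClosed.exists_pow_nat_eq (μ * ⟨G, t⟩) two_pos
  obtain ⟨ζ₂, hζ₂⟩ := IsAlgClosed.exists_pow_nat_eq (μ * ⟨-G, t⟩) two_pos
  refine ⟨ζ₁, ζ₂, hunit rfl hζ₁, hunit (neg_sq G) hζ₂, fun ζ hζ => ?_⟩
  have hy : ‖conj μ * ζ ^ 2‖ = 1 := by rw [norm_mul, norm_conj, norm_pow, hμ, hζ]; norm_num
  obtain ⟨w, hw, hle⟩ := exists_mul_norm_sub_le_abs_im_sub hy htG hG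
  obtain ⟨ζ₀, hmem, hζ₀, hζ₀w⟩ : ∃ ζ₀ ∈ ({ζ₁, ζ₂} : Set ℂ), ‖ζ₀‖ = 1 ∧ ζ₀ ^ 2 = μ * w := by
    rcases hw with rfl | rfl
    · exact ⟨ζ₁, Or.inl rfl, hunit rfl hζ₁, hζ₁⟩
    · exact ⟨ζ₂, Or.inr rfl, hunit (neg_sq G) hζ₂, hζ₂⟩
  refine ⟨ζ₀, hmem, ?_⟩
  have hdist : ‖ζ ^ 2 - ζ₀ ^ 2‖ = ‖conj μ * ζ ^ 2 - w‖ := by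
    have hμμ : conj μ * μ = 1 := by rw [conj_mul', hμ]; norm_num
    rw [← one_mul w, ← hμμ, mul_assoc, ← hζ₀w, ← mul_sub, norm_mul, norm_conj, hμ, one_mul]
  exact (mul_le_mul_of_nonneg_left
    ((abs_im_conj_mul_le_norm_sq_sub hζ hζ₀).trans hdist.le) hG).trans hle

theorem exists_pair_mul_norm_mul_abs_im_conj_mul_le {μ : ℂ} (hμ : ‖μ‖ = 1) {t G : ℝ}
    (htG : t ^ 2 + G ^ 2 = 1) (hG : 0 ≤ G) :
    ∃ ζ₁ ζ₂ : ℂ, ‖ζ₁‖ = 1 ∧ ‖ζ₂‖ = 1 ∧ ∀ ξ : ℂ, ∃ ζ₀ ∈ ({ζ₁, ζ₂} : Set ℂ),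
      G * ‖ξ‖ * |(conj ζ₀ * ξ).im| ≤ 3 * |(conj μ * ξ ^ 2).im - t * ‖ξ‖ ^ 2| := by
  obtain ⟨ζ₁, ζ₂, hζ₁, hζ₂, hunit⟩ := exists_pair_mul_abs_im_conj_mul_le hμ htG hG
  refine ⟨ζ₁, ζ₂, hζ₁, hζ₂, fun ξ => ?_⟩
  rcases eq_or_ne ξ 0 with rfl | hξ
  · exact ⟨ζ₁, Or.inl rfl, by simp⟩
  have hm : 0 < ‖ξ‖ := norm_pos_iff.2 hξ
  set ζ := (‖ξ‖⁻¹ : ℂ) * ξ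
  have hξζ : ξ = ‖ξ‖ * ζ := by
    rw [← mul_assoc, mul_inv_cancel₀ (by exact_mod_cast hm.ne'), one_mul]
  have hζ : ‖ζ‖ = 1 := by
    rw [norm_mul, norm_inv, norm_real, norm_norm, inv_mul_cancel₀ hm.ne']
  obtain ⟨ζ₀, hmem, hle⟩ := hunit ζ hζ
  refine ⟨ζ₀, hmem, ?_⟩
  have him₁ : (conj ζ₀ * ξ).im = ‖ξ‖ * (conj ζ₀ * ζ).im := by
    conv_lhs => rw [hξζ]
    rw [mul_left_comm, im_ofReal_mul]
  have him₂ : (conj μ * ξ ^ 2).im - t * ‖ξ‖ ^ 2 = ‖ξ‖ ^ 2 * ((conj μ * ζ ^ 2).im - t) := by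
    nth_rewrite 1 [hξζ]
    rw [mul_pow, ← ofReal_pow, mul_left_comm, im_ofReal_mul]
    ring
  rw [him₁, him₂, abs_mul, abs_mul, abs_of_pos hm, abs_of_nonneg (sq_nonneg ‖ξ‖)]
  nlinarith [mul_le_mul_of_nonneg_left hle (sq_nonneg ‖ξ‖)]

/-- When `μ` and `ξ` are the coordinates of `u` and `ω` in an orthonormal pair `p, q`, the
hypothesis says that the component of `κ_ω(u)` orthogonal to `p` has length at most `ε`. -/
theorem abs_im_conj_mul_sq_sub_le {r ε : ℝ} (hr : 0 ≤ r) (hε : 0 ≤ ε) (μ : ℂ) {ξ : ℂ}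
    (hξ : ‖ξ‖ ≤ 1)
    (h : (μ.im - (1 + r) * (conj μ * ξ).re * ξ.im) ^ 2 +
      ((1 + r) * (conj μ * ξ).re) ^ 2 * (1 - ‖ξ‖ ^ 2) ≤ ε ^ 2) :
    |(conj μ * ξ ^ 2).im - (1 - r) * μ.im / (1 + r) * ‖ξ‖ ^ 2| ≤ 4 * ε := by
  set X := μ.im - (1 + r) * (conj μ * ξ).re * ξ.im
  set Y := (1 + r) * (conj μ * ξ).re
  have hm2 : ‖ξ‖ ^ 2 = ξ.re ^ 2 + ξ.im ^ 2 := by rw [Complex.sq_norm, normSq_apply]; ring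
  have hW : 0 ≤ 1 - ‖ξ‖ ^ 2 := by nlinarith [norm_nonneg ξ]
  have hX : |X * ‖ξ‖ ^ 2| ≤ ε := by
    have hX : |X| ≤ ε := abs_le_of_sq_le_sq (by nlinarith [mul_nonneg (sq_nonneg Y) hW]) hε
    rw [abs_mul, abs_of_nonneg (sq_nonneg ‖ξ‖)]
    nlinarith [abs_nonneg X]
  have hY : |Y * ξ.im * (1 - ‖ξ‖ ^ 2)| ≤ ε := by
    refine abs_le_of_sq_le_sq ?_ hε
    have hβ : ξ.im ^ 2 * (1 - ‖ξ‖ ^ 2) ≤ 1 := by nlinarith [sq_nonneg ξ.re]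
    calc (Y * ξ.im * (1 - ‖ξ‖ ^ 2)) ^ 2
        = Y ^ 2 * (1 - ‖ξ‖ ^ 2) * (ξ.im ^ 2 * (1 - ‖ξ‖ ^ 2)) := by ring
      _ ≤ Y ^ 2 * (1 - ‖ξ‖ ^ 2) * 1 := by gcongr
      _ ≤ ε ^ 2 := by nlinarith [sq_nonneg X]
  have hid : (1 + r) * ((conj μ * ξ ^ 2).im - (1 - r) * μ.im / (1 + r) * ‖ξ‖ ^ 2) =
      2 * (Y * ξ.im * (1 - ‖ξ‖ ^ 2) - X * ‖ξ‖ ^ 2) := by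
    simp only [X, Y, hm2, mul_im, mul_re, conj_re, conj_im, sq]
    field_simp
    ring
  have h2 : (1 + r) * |(conj μ * ξ ^ 2).im - (1 - r) * μ.im / (1 + r) * ‖ξ‖ ^ 2| ≤ 4 * ε := by
    calc _ = |2 * (Y * ξ.im * (1 - ‖ξ‖ ^ 2) - X * ‖ξ‖ ^ 2)| := by
          rw [← hid, abs_mul, abs_of_pos (by linarith : (0 : ℝ) < 1 + r)]
      _ ≤ 2 * (|Y * ξ.im * (1 - ‖ξ‖ ^ 2)| + |X * ‖ξ‖ ^ 2|) := by
          rw [abs_mul, abs_two]; gcongr; exact abs_sub _ _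
      _ ≤ 4 * ε := by linarith
  nlinarith [abs_nonneg ((conj μ * ξ ^ 2).im - (1 - r) * μ.im / (1 + r) * ‖ξ‖ ^ 2)]

theorem one_half_lt_norm {r ε : ℝ} (hr : 0 ≤ r) (hε : 0 ≤ ε) {μ ξ : ℂ}
    (h : (μ.im - (1 + r) * (conj μ * ξ).re * ξ.im) ^ 2 +
      ((1 + r) * (conj μ * ξ).re) ^ 2 * (1 - ‖ξ‖ ^ 2) ≤ ε ^ 2)
    (hs : 2 * ε < |(conj μ * ξ).re|) : 1 / 2 < ‖ξ‖ := by
  set Y := (1 + r) * (conj μ * ξ).re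
  have hY : 4 * ε ^ 2 < Y ^ 2 := by
    have hs2 : 4 * ε ^ 2 < |(conj μ * ξ).re| ^ 2 := by nlinarith [abs_nonneg (conj μ * ξ).re]
    rw [mul_pow, ← sq_abs (conj μ * ξ).re]
    nlinarith [mul_le_mul_of_nonneg_right (one_le_pow₀ (n := 2) (by linarith : (1 : ℝ) ≤ 1 + r))
      (sq_nonneg |(conj μ * ξ).re|)]
  by_contra! hm
  have h34 : 3 / 4 ≤ 1 - ‖ξ‖ ^ 2 := by nlinarith [norm_nonneg ξ]
  nlinarith [mul_le_mul_of_nonneg_left h34 (sq_nonneg Y),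
    sq_nonneg (μ.im - (1 + r) * (conj μ * ξ).re * ξ.im)]

theorem exists_pair_sqrt_mul_abs_im_conj_mul_le {r : ℝ} (hr0 : 0 ≤ r) (hr1 : r ≤ 1) {μ : ℂ}
    (hμ : ‖μ‖ = 1) :
    ∃ ζ₁ ζ₂ : ℂ, ‖ζ₁‖ = 1 ∧ ‖ζ₂‖ = 1 ∧ ∀ ξ : ℂ, ‖ξ‖ ≤ 1 → ∀ ε : ℝ, 0 ≤ ε →
      (μ.im - (1 + r) * (conj μ * ξ).re * ξ.im) ^ 2 +
        ((1 + r) * (conj μ * ξ).re) ^ 2 * (1 - ‖ξ‖ ^ 2) ≤ ε ^ 2 →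
      2 * ε < |(conj μ * ξ).re| →
      ∃ ζ₀ ∈ ({ζ₁, ζ₂} : Set ℂ), √r * |(conj ζ₀ * ξ).im| ≤ 24 * ε := by
  set t := (1 - r) * μ.im / (1 + r)
  have ht : t ^ 2 ≤ 1 - r := by
    have hb : μ.im ^ 2 ≤ 1 := by
      have h := Complex.sq_norm μ
      rw [hμ, normSq_apply] at h
      nlinarith [sq_nonneg μ.re]
    rw [div_pow, div_le_iff₀ (by positivity), mul_pow]
    nlinarith [mul_le_mul_of_nonneg_left hb (sq_nonneg (1 - r)), mul_nonneg hr0 (sq_nonneg r)]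
  set G := √(1 - t ^ 2)
  have htG : t ^ 2 + G ^ 2 = 1 := by rw [Real.sq_sqrt (by linarith)]; ring
  have hG : √r ≤ G := Real.sqrt_le_sqrt (by linarith)
  obtain ⟨ζ₁, ζ₂, hζ₁, hζ₂, hdir⟩ :=
    exists_pair_mul_norm_mul_abs_im_conj_mul_le hμ htG (Real.sqrt_nonneg _)
  refine ⟨ζ₁, ζ₂, hζ₁, hζ₂, fun ξ hξ ε hε h hs => ?_⟩
  obtain ⟨ζ₀, hζ₀, hle⟩ := hdir ξ
  refine ⟨ζ₀, hζ₀, ?_⟩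
  have hm := one_half_lt_norm hr0 hε h hs
  have herr := abs_im_conj_mul_sq_sub_le hr0 hε μ hξ h
  calc √r * |(conj ζ₀ * ξ).im| ≤ G * |(conj ζ₀ * ξ).im| := by gcongr
    _ ≤ 2 * (G * ‖ξ‖ * |(conj ζ₀ * ξ).im|) := by
        nlinarith [mul_nonneg (Real.sqrt_nonneg (1 - t ^ 2)) (abs_nonneg (conj ζ₀ * ξ).im)]
    _ ≤ 24 * ε := by linarith

end Complex

section InnerProductSpace

variable {E : Type*} [NormedAddCommGroup E] [InnerProductSpace ℝ E]

theorem inv_norm_smul_smul_of_pos {c : ℝ} (hc : 0 < c) (x : E) :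
    ‖c • x‖⁻¹ • (c • x) = ‖x‖⁻¹ • x := by
  rw [norm_smul, Real.norm_of_nonneg hc.le, smul_smul, mul_inv, mul_right_comm,
    inv_mul_cancel₀ hc.ne', one_mul]

theorem sq_norm_sub_sq_inner_le {p k : E} (hp : ‖p‖ = 1) {δ : ℝ}
    (h : 1 - |⟪‖k‖⁻¹ • k, p⟫| ≤ δ) : ‖k‖ ^ 2 - ⟪k, p⟫ ^ 2 ≤ 2 * δ * ‖k‖ ^ 2 := by
  have hkp : |⟪k, p⟫| ≤ ‖k‖ := by simpa [hp] using abs_real_inner_le_norm k p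
  rw [real_inner_smul_left, abs_mul, abs_inv, abs_norm] at h
  have hclose : ‖k‖ - |⟪k, p⟫| ≤ δ * ‖k‖ := by
    rcases (norm_nonneg k).eq_or_lt with hk | hk
    · rw [← hk] at hkp ⊢; linarith [abs_nonneg ⟪k, p⟫]
    · have := mul_le_mul_of_nonneg_left h hk.le
      rwa [mul_sub, mul_one, ← mul_assoc, mul_inv_cancel₀ hk.ne', one_mul, mul_comm] at this
  rw [← sq_abs ⟪k, p⟫]
  nlinarith [abs_nonneg ⟪k, p⟫]

theorem exists_unit_orthogonal (hE : 2 ≤ finrank ℝ E) (p : E) :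
    ∃ q : E, ‖q‖ = 1 ∧ ⟪p, q⟫ = 0 := by
  have : FiniteDimensional ℝ E := Module.finite_of_finrank_pos (by omega)
  have hK := (ℝ ∙ p).finrank_add_finrank_orthogonal
  have hp : finrank ℝ (ℝ ∙ p) ≤ 1 := (finrank_span_le_card ({p} : Set E)).trans (by simp)
  obtain ⟨⟨x, hx⟩, hx0⟩ :=
    Module.finrank_pos_iff_exists_ne_zero.1 (by omega : 0 < finrank ℝ (ℝ ∙ p)ᗮ)
  have hx0 : x ≠ 0 := fun h => hx0 (Subtype.ext h)
  refine ⟨‖x‖⁻¹ • x, norm_smul_inv_norm hx0, ?_⟩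
  rw [real_inner_smul_right, Submodule.mem_orthogonal_singleton_iff_inner_right.1 hx, mul_zero]

theorem exists_orthonormal_decomposition (hE : 2 ≤ finrank ℝ E) {p : E} (hp : ‖p‖ = 1) (u : E) :
    ∃ q : E, ‖q‖ = 1 ∧ ⟪p, q⟫ = 0 ∧ u = ⟪p, u⟫ • p + ⟪q, u⟫ • q := by
  set w := u - ⟪p, u⟫ • p
  have hpw : ⟪p, w⟫ = 0 := by
    rw [inner_sub_right, real_inner_smul_right, real_inner_self_eq_norm_sq, hp]; ring
  rcases eq_or_ne w 0 with hw | hw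
  · obtain ⟨q, hq, hpq⟩ := exists_unit_orthogonal hE p
    refine ⟨q, hq, hpq, ?_⟩
    have hu : u = ⟪p, u⟫ • p := sub_eq_zero.1 hw
    have hqu : ⟪q, u⟫ = 0 := by rw [hu, real_inner_smul_right, real_inner_comm p q, hpq, mul_zero]
    rw [hqu, zero_smul, add_zero, ← hu]
  · refine ⟨‖w‖⁻¹ • w, norm_smul_inv_norm hw, by rw [real_inner_smul_right, hpw, mul_zero], ?_⟩
    have hwu : ⟪w, u⟫ = ‖w‖ ^ 2 := by
      have hu : u = w + ⟪p, u⟫ • p := (sub_add_cancel u _).symm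
      rw [hu, inner_add_right, real_inner_smul_right, real_inner_comm p w, hpw, mul_zero,
        add_zero, real_inner_self_eq_norm_sq]
    have hw0 : ‖w‖ ≠ 0 := norm_ne_zero_iff.2 hw
    rw [real_inner_smul_left, hwu, smul_smul, show ‖w‖⁻¹ * ‖w‖ ^ 2 * ‖w‖⁻¹ = 1 by field_simp,
      one_smul]
    exact (add_sub_cancel _ u).symm

def planeCoord (p q x : E) : ℂ :=
  ⟨⟪p, x⟫, ⟪q, x⟫⟩

@[simp] theorem planeCoord_re (p q x : E) : (planeCoord p q x).re = ⟪p, x⟫ := rfl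

@[simp] theorem planeCoord_im (p q x : E) : (planeCoord p q x).im = ⟪q, x⟫ := rfl

theorem inner_re_smul_add_im_smul (p q : E) (z : ℂ) (x : E) :
    ⟪z.re • p + z.im • q, x⟫ = (conj z * planeCoord p q x).re := by
  simp [inner_add_left, real_inner_smul_left]

theorem norm_smul_add_smul_sq {p q : E} (hp : ‖p‖ = 1) (hq : ‖q‖ = 1) (hpq : ⟪p, q⟫ = 0)
    (x y : ℝ) : ‖x • p + y • q‖ ^ 2 = x ^ 2 + y ^ 2 := by
  rw [norm_add_sq_real, norm_smul, norm_smul, real_inner_smul_left, real_inner_smul_right, hpq,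
    hp, hq, Real.norm_eq_abs, Real.norm_eq_abs, mul_one, mul_one, sq_abs, sq_abs]
  ring

theorem norm_re_smul_add_im_smul {p q : E} (hp : ‖p‖ = 1) (hq : ‖q‖ = 1) (hpq : ⟪p, q⟫ = 0)
    (z : ℂ) : ‖z.re • p + z.im • q‖ = ‖z‖ := by
  rw [← sq_eq_sq₀ (norm_nonneg _) (norm_nonneg _), norm_smul_add_smul_sq hp hq hpq, Complex.sq_norm,
    Complex.normSq_apply]
  ring

theorem norm_planeCoord_le {p q : E} (hp : ‖p‖ = 1) (hq : ‖q‖ = 1) (hpq : ⟪p, q⟫ = 0)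
    (x : E) : ‖planeCoord p q x‖ ≤ ‖x‖ := by
  have h := norm_sub_sq_real x (⟪p, x⟫ • p + ⟪q, x⟫ • q)
  rw [norm_smul_add_smul_sq hp hq hpq, inner_add_right, real_inner_smul_right,
    real_inner_smul_right, real_inner_comm p, real_inner_comm q] at h
  have hsq : ‖planeCoord p q x‖ ^ 2 = ⟪p, x⟫ ^ 2 + ⟪q, x⟫ ^ 2 := by
    rw [Complex.sq_norm, Complex.normSq_apply]; simp [sq]
  refine (pow_le_pow_iff_left₀ (norm_nonneg _) (norm_nonneg _) two_ne_zero).1 ?_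
  nlinarith [sq_nonneg ‖x - (⟪p, x⟫ • p + ⟪q, x⟫ • q)‖]

end InnerProductSpace

section Scattering

variable {d : ℕ} {r : ℝ}

theorem sphereSurfaceMeasure_sphereSlab_le {e : EuclideanSpace ℝ (Fin d)} (he : ‖e‖ = 1) {w : ℝ}
    (hw : 0 ≤ w) : sphereSurfaceMeasure d (sphereSlab e w) ≤ ENNReal.ofReal (d * 2 ^ d * w) := by
  have h := toSphere_sphereSlab_le he hw
  rwa [finrank_euclideanSpace_fin] at h

theorem inelasticScatter_smul (ω v : EuclideanSpace ℝ (Fin d)) (c : ℝ) :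
    inelasticScatter d r ω (c • v) = c • inelasticScatter d r ω v := by
  rw [inelasticScatter, inelasticScatter, real_inner_smul_left]
  module

theorem inner_inelasticScatter (ω v e : EuclideanSpace ℝ (Fin d)) :
    ⟪inelasticScatter d r ω v, e⟫ = ⟪v, e⟫ - (1 + r) * ⟪v, ω⟫ * ⟪ω, e⟫ := by
  rw [inelasticScatter, inner_sub_left, real_inner_smul_left]

theorem norm_inelasticScatter_sq {ω : EuclideanSpace ℝ (Fin d)} (hω : ‖ω‖ = 1)
    (v : EuclideanSpace ℝ (Fin d)) :
    ‖inelasticScatter d r ω v‖ ^ 2 = ‖v‖ ^ 2 - (1 - r ^ 2) * ⟪v, ω⟫ ^ 2 := by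
  rw [inelasticScatter, norm_sub_sq_real, real_inner_smul_right, norm_smul, hω,
    Real.norm_eq_abs, mul_one, sq_abs]
  ring

theorem norm_inelasticScatter_sq_sub_sq_inner {p q u ω : EuclideanSpace ℝ (Fin d)}
    (hp : ‖p‖ = 1) (hq : ‖q‖ = 1) (hpq : ⟪p, q⟫ = 0) (hu : u = ⟪p, u⟫ • p + ⟪q, u⟫ • q)
    (hω : ‖ω‖ = 1) :
    ‖inelasticScatter d r ω u‖ ^ 2 - ⟪inelasticScatter d r ω u, p⟫ ^ 2 =
      (⟪q, u⟫ - (1 + r) * ⟪u, ω⟫ * ⟪q, ω⟫) ^ 2 +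
        ((1 + r) * ⟪u, ω⟫) ^ 2 * (1 - ‖planeCoord p q ω‖ ^ 2) := by
  have hnorm : ‖u‖ ^ 2 = ⟪p, u⟫ ^ 2 + ⟪q, u⟫ ^ 2 := by
    rw [hu, norm_smul_add_smul_sq hp hq hpq, ← hu]
  have hs : ⟪u, ω⟫ = ⟪p, u⟫ * ⟪p, ω⟫ + ⟪q, u⟫ * ⟪q, ω⟫ := by
    conv_lhs => rw [hu]
    rw [inner_add_left, real_inner_smul_left, real_inner_smul_left]
  rw [norm_inelasticScatter_sq hω, inner_inelasticScatter, real_inner_comm p u,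
    real_inner_comm p ω, hnorm, Complex.sq_norm, Complex.normSq_apply, planeCoord_re,
    planeCoord_im, hs]
  ring

theorem exists_sphereSlab_cover_of_almost_colinear (hd : 2 ≤ d) (hr0 : 0 < r) (hr1 : r ≤ 1)
    {u p : EuclideanSpace ℝ (Fin d)} (hu : ‖u‖ = 1) (hp : ‖p‖ = 1) :
    ∃ n₁ n₂ : EuclideanSpace ℝ (Fin d), ‖n₁‖ = 1 ∧ ‖n₂‖ = 1 ∧ ∀ ε : ℝ, 0 ≤ ε →
      {ω : sphere (0 : EuclideanSpace ℝ (Fin d)) 1 |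
        1 - |⟪‖inelasticScatter d r ω u‖⁻¹ • inelasticScatter d r ω u, p⟫| ≤ ε ^ 2 / 2} ⊆
      sphereSlab u (2 * ε) ∪ sphereSlab n₁ (24 * ε / √r) ∪ sphereSlab n₂ (24 * ε / √r) := by
  obtain ⟨q, hq, hpq, hu_eq⟩ :=
    exists_orthonormal_decomposition (by rwa [finrank_euclideanSpace_fin]) hp u
  set μ := planeCoord p q u
  have hμ : ‖μ‖ = 1 := by
    rw [← norm_re_smul_add_im_smul hp hq hpq, ← hu]
    exact congrArg norm hu_eq.symm
  obtain ⟨ζ₁, ζ₂, hζ₁, hζ₂, hplanar⟩ :=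
    Complex.exists_pair_sqrt_mul_abs_im_conj_mul_le hr0.le hr1 hμ
  set n : ℂ → EuclideanSpace ℝ (Fin d) := fun ζ => (Complex.I * ζ).re • p + (Complex.I * ζ).im • q
  have hn : ∀ ζ : ℂ, ‖ζ‖ = 1 → ‖n ζ‖ = 1 := fun ζ hζ => by
    rw [norm_re_smul_add_im_smul hp hq hpq, norm_mul, Complex.norm_I, hζ, one_mul]
  refine ⟨n ζ₁, n ζ₂, hn ζ₁ hζ₁, hn ζ₂ hζ₂, fun ε hε ω hbad => ?_⟩
  have hω : ‖(ω : EuclideanSpace ℝ (Fin d))‖ = 1 := norm_eq_of_mem_sphere ω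
  set ξ := planeCoord p q ω
  have hs : ⟪u, ω⟫ = (conj μ * ξ).re := by
    conv_lhs => rw [hu_eq]
    exact inner_re_smul_add_im_smul p q μ ω
  have hkey : (μ.im - (1 + r) * (conj μ * ξ).re * ξ.im) ^ 2 +
      ((1 + r) * (conj μ * ξ).re) ^ 2 * (1 - ‖ξ‖ ^ 2) ≤ ε ^ 2 := by
    have h := sq_norm_sub_sq_inner_le hp hbad
    have hκ : ‖inelasticScatter d r ω u‖ ^ 2 ≤ 1 := by
      rw [norm_inelasticScatter_sq hω, hu]
      have : r ^ 2 ≤ 1 := by nlinarith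
      nlinarith [mul_nonneg (sub_nonneg.2 this) (sq_nonneg ⟪u, (ω : EuclideanSpace ℝ (Fin d))⟫)]
    rw [norm_inelasticScatter_sq_sub_sq_inner hp hq hpq hu_eq hω, hs] at h
    change (μ.im - _ * ξ.im) ^ 2 + _ * (1 - ‖ξ‖ ^ 2) ≤ _ at h
    nlinarith [mul_le_mul_of_nonneg_left hκ (sq_nonneg ε)]
  by_cases hsmall : |⟪u, (ω : EuclideanSpace ℝ (Fin d))⟫| ≤ 2 * ε
  · exact Or.inl (Or.inl hsmall)
  rw [hs, not_le] at hsmall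
  obtain ⟨ζ₀, hζ₀, hle⟩ := hplanar ξ (hω ▸ norm_planeCoord_le hp hq hpq ω) ε hε hkey hsmall
  have hslab : ω ∈ sphereSlab (n ζ₀) (24 * ε / √r) := by
    have him : ⟪n ζ₀, ω⟫ = (conj ζ₀ * ξ).im := by
      rw [inner_re_smul_add_im_smul]; simp [ξ]; ring
    rw [mem_sphereSlab, him, le_div_iff₀ (Real.sqrt_pos.2 hr0), mul_comm]
    exact hle
  rcases hζ₀ with rfl | rfl
  · exact Or.inl (Or.inr hslab)
  · exact Or.inr hslab

end Scattering

/-- Almost colinearity after scattering: there are constants `δ₀, C > 0` depending only on `d`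
and `r` such that, for every `v ≠ 0`, every unit vector `p`, and every `0 < δ ≤ δ₀`, the set of
angular parameters `ω ∈ S^{d−1}` for which `1 − |⟪κ_ω(v)/‖κ_ω(v)‖, p⟫| ≤ δ` is contained in a
measurable set of spherical measure at most `C·δ^(1/2)`. -/
theorem almost_colinearity_after_scattering (d : ℕ) (hd : 2 ≤ d) (r : ℝ)
    (hr : r ∈ Set.Ioo (0 : ℝ) 1) :
    ∃ δ₀ : ℝ, 0 < δ₀ ∧ ∃ C : ℝ, 0 < C ∧
      ∀ v : EuclideanSpace ℝ (Fin d), v ≠ 0 →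
      ∀ p : EuclideanSpace ℝ (Fin d), ‖p‖ = 1 →
      ∀ δ : ℝ, 0 < δ → δ ≤ δ₀ →
        ∃ P : Set (sphere (0 : EuclideanSpace ℝ (Fin d)) 1), MeasurableSet P ∧
          sphereSurfaceMeasure d P ≤ ENNReal.ofReal (C * δ ^ ((1 : ℝ) / 2)) ∧
          ∀ ω : sphere (0 : EuclideanSpace ℝ (Fin d)) 1,
            1 - |⟪‖inelasticScatter d r (ω : EuclideanSpace ℝ (Fin d)) v‖⁻¹ •
                  inelasticScatter d r (ω : EuclideanSpace ℝ (Fin d)) v, p⟫| ≤ δ → ω ∈ P := by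
  obtain ⟨hr0, hr1⟩ := hr
  refine ⟨1, one_pos, d * 2 ^ d * (2 + 48 / √r) * √2, by positivity, fun v hv p hp δ hδ _ => ?_⟩
  set u := ‖v‖⁻¹ • v
  obtain ⟨n₁, n₂, hn₁, hn₂, hcover⟩ := exists_sphereSlab_cover_of_almost_colinear hd hr0 hr1.le
    (norm_smul_inv_norm (𝕜 := ℝ) hv : ‖u‖ = 1) hp
  set ε := √2 * δ ^ ((1 : ℝ) / 2)
  have hε : 0 ≤ ε := by positivity
  have hεδ : ε ^ 2 / 2 = δ := by
    rw [mul_pow, ← Real.sqrt_eq_rpow, Real.sq_sqrt zero_le_two, Real.sq_sqrt hδ.le]; ring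
  refine ⟨sphereSlab u (2 * ε) ∪ sphereSlab n₁ (24 * ε / √r) ∪ sphereSlab n₂ (24 * ε / √r),
    ((measurableSet_sphereSlab _ _).union (measurableSet_sphereSlab _ _)).union
      (measurableSet_sphereSlab _ _), ?_, fun ω hω => hcover ε hε ?_⟩
  · calc _ ≤ _ := (measure_union_le _ _).trans (add_le_add_left (measure_union_le _ _) _)
      _ ≤ ENNReal.ofReal (d * 2 ^ d * (2 * ε)) + ENNReal.ofReal (d * 2 ^ d * (24 * ε / √r)) +
          ENNReal.ofReal (d * 2 ^ d * (24 * ε / √r)) :=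
        add_le_add (add_le_add (sphereSurfaceMeasure_sphereSlab_le (norm_smul_inv_norm hv)
          (by positivity)) (sphereSurfaceMeasure_sphereSlab_le hn₁ (by positivity)))
          (sphereSurfaceMeasure_sphereSlab_le hn₂ (by positivity))
      _ = _ := by
        rw [← ENNReal.ofReal_add (by positivity) (by positivity),
          ← ENNReal.ofReal_add (by positivity) (by positivity)]
        congr 1
        ring
  · rw [Set.mem_ofPred_eq, hεδ]
    rwa [← smul_inv_smul₀ (norm_ne_zero_iff.2 hv) v, inelasticScatter_smul,
      inv_norm_smul_smul_of_pos (norm_pos_iff.2 hv)] at hω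
end
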